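/- Let D ∈ ℝ^{p×n}, s ∈ {1,…,n} with 2s ≤ n, and δ ∈ (0,1). Suppose D satisfies the restricted isometry property of order 2s with constant δ, i.e., (1−δ)‖z‖₂² ≤ ‖Dz‖₂² ≤ (1+δ)‖z‖₂² for every 2s-sparse vector z ∈ ℝⁿ. Let k ≥ 1, let Z ∈ ℝ^{n×k} be s-row-sparse, let E ∈ ℝ^{p×k}, and set Y = DZ + E. Then any best approximation Z'' of DᵀY by an s-row-sparse matrix (obtained by keeping the s rows of DᵀY with largest ℓ₂ norms and zeroing the others) satisfies ‖Z − Z''‖_F ≤ 2δ‖Z‖_F + 2√2 ‖E‖_F. -/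

import Mathlib

/-!
Let `S` be the union of the row supports of `Z` and `Z''`, so `|S| ≤ 2s`, and let `P_S` keep the
rows in `S`. Both `Z` and `Z''` vanish off `S`, so the residuals `DᵀY - Z` and `DᵀY - Z''` agree
there, and minimality of `Z''` gives `‖P_S(DᵀY - Z'')‖ ≤ ‖P_S(DᵀY - Z)‖`; hence
`‖Z - Z''‖ ≤ 2‖P_S(DᵀY - Z)‖`. Column by column, `P_S(DᵀY - Z) = P_S(DᵀD - I)z + P_S Dᵀe`.
Polarizing the RIP on vectors supported in `S` gives `⟪Dx, Dz⟫ - ⟪x, z⟫ ≤ δ‖x‖‖z‖`, which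
bounds the first term by `δ‖z‖`, and the upper RIP bound gives `‖P_S Dᵀe‖² ≤ (1 + δ)‖e‖²`.
-/

open MeasureTheory ProbabilityTheory Matrix

noncomputable section

/-- Frobenius inner product of two real matrices. -/
def frobInner {a b : ℕ} (X Y : Matrix (Fin a) (Fin b) ℝ) : ℝ :=
  ∑ i, ∑ j, X i j * Y i j

/-- Frobenius norm of a real matrix. -/
def frobNorm {a b : ℕ} (X : Matrix (Fin a) (Fin b) ℝ) : ℝ :=
  Real.sqrt (∑ i, ∑ j, (X i j) ^ 2)

/-- Sign function with values in {−1, 1}. -/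
def sgn (x : ℝ) : ℝ := if x < 0 then -1 else 1

/-- A vector is `s`-sparse if its support is contained in a set of size at most `s`. -/
def SparseVec {n : ℕ} (s : ℕ) (z : Fin n → ℝ) : Prop :=
  ∃ S : Finset (Fin n), S.card ≤ s ∧ ∀ i, z i ≠ 0 → i ∈ S

/-- A matrix is `s`-row-sparse if its nonzero rows are indexed by a set of size at most `s`. -/
def RowSparse {n k : ℕ} (s : ℕ) (Z : Matrix (Fin n) (Fin k) ℝ) : Prop :=
  ∃ S : Finset (Fin n), S.card ≤ s ∧ ∀ i, (∃ j, Z i j ≠ 0) → i ∈ S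

/-- A matrix is `s`-column-sparse if its nonzero columns are indexed by a set of size ≤ `s`. -/
def ColSparse {n k : ℕ} (s : ℕ) (Z : Matrix (Fin n) (Fin k) ℝ) : Prop :=
  ∃ T : Finset (Fin k), T.card ≤ s ∧ ∀ j, (∃ i, Z i j ≠ 0) → j ∈ T

/-- `D` satisfies the restricted isometry property of order `t` with constant `δ`. -/
def RIP {p n : ℕ} (t : ℕ) (δ : ℝ) (D : Matrix (Fin p) (Fin n) ℝ) : Prop :=
  ∀ z : Fin n → ℝ, SparseVec t z →
    (1 - δ) * (∑ i, (z i) ^ 2) ≤ (∑ i, (D.mulVec z i) ^ 2) ∧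
    (∑ i, (D.mulVec z i) ^ 2) ≤ (1 + δ) * (∑ i, (z i) ^ 2)


open Finset Function

lemma sum_sq_eq_dotProduct_self {ι : Type*} [Fintype ι] (x : ι → ℝ) : ∑ i, x i ^ 2 = x ⬝ᵥ x := by
  simp only [dotProduct, sq]

lemma dotProduct_self_nonneg {ι : Type*} [Fintype ι] (x : ι → ℝ) : 0 ≤ x ⬝ᵥ x :=
  Finset.sum_nonneg fun i _ => mul_self_nonneg (x i)

lemma indicator_dotProduct_indicator {ι : Type*} [Fintype ι] (s : Set ι) (x y : ι → ℝ) :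
    s.indicator x ⬝ᵥ s.indicator y = s.indicator x ⬝ᵥ y := by
  refine Finset.sum_congr rfl fun i _ => ?_
  by_cases hi : i ∈ s <;> simp [hi]

lemma frobNorm_nonneg {a b : ℕ} (X : Matrix (Fin a) (Fin b) ℝ) : 0 ≤ frobNorm X :=
  Real.sqrt_nonneg _

lemma frobNorm_sq {a b : ℕ} (X : Matrix (Fin a) (Fin b) ℝ) :
    frobNorm X ^ 2 = ∑ i, ∑ j, X i j ^ 2 :=
  Real.sq_sqrt (by positivity)

lemma frobNorm_eq_sqrt_sum_dotProduct_col {a b : ℕ} (X : Matrix (Fin a) (Fin b) ℝ) :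
    frobNorm X = Real.sqrt (∑ j, Xᵀ j ⬝ᵥ Xᵀ j) := by
  rw [frobNorm, Finset.sum_comm]
  simp only [sum_sq_eq_dotProduct_self]
  rfl

lemma frobNorm_le_sqrt_mul_of_col {a b c : ℕ} {X : Matrix (Fin a) (Fin b) ℝ}
    {Y : Matrix (Fin c) (Fin b) ℝ} {r : ℝ} (h : ∀ j, Xᵀ j ⬝ᵥ Xᵀ j ≤ r * (Yᵀ j ⬝ᵥ Yᵀ j)) :
    frobNorm X ≤ Real.sqrt r * frobNorm Y := by
  rw [frobNorm_eq_sqrt_sum_dotProduct_col, frobNorm_eq_sqrt_sum_dotProduct_col,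
    ← Real.sqrt_mul' r (Finset.sum_nonneg fun j _ => dotProduct_self_nonneg (Yᵀ j))]
  exact Real.sqrt_le_sqrt ((Finset.sum_le_sum fun j _ => h j).trans_eq (Finset.mul_sum ..).symm)

section Frobenius

attribute [local instance] Matrix.frobeniusNormedAddCommGroup

lemma frobNorm_eq_norm {a b : ℕ} (X : Matrix (Fin a) (Fin b) ℝ) : frobNorm X = ‖X‖ := by
  simp [frobNorm, frobenius_norm_def, Real.sqrt_eq_rpow]

lemma frobNorm_add_le {a b : ℕ} (X Y : Matrix (Fin a) (Fin b) ℝ) :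
    frobNorm (X + Y) ≤ frobNorm X + frobNorm Y := by
  simpa only [frobNorm_eq_norm] using norm_add_le X Y

lemma frobNorm_sub_le {a b : ℕ} (X Y : Matrix (Fin a) (Fin b) ℝ) :
    frobNorm (X - Y) ≤ frobNorm X + frobNorm Y := by
  simpa only [frobNorm_eq_norm] using norm_sub_le X Y

end Frobenius

section restrictRows

variable {m k : Type*}

open Classical in
def restrictRows (s : Set m) (A : Matrix m k ℝ) : Matrix m k ℝ :=
  of fun i j => if i ∈ s then A i j else 0

open Classical in
@[simp]
lemma restrictRows_apply (s : Set m) (A : Matrix m k ℝ) (i : m) (j : k) :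
    restrictRows s A i j = if i ∈ s then A i j else 0 :=
  rfl

lemma restrictRows_eq_self {s : Set m} {A : Matrix m k ℝ} (h : support A ⊆ s) :
    restrictRows s A = A := by
  ext i j
  by_cases hi : i ∈ s
  · simp [hi]
  · simp [hi, notMem_support.1 (mt (@h i) hi)]

lemma restrictRows_add (s : Set m) (A B : Matrix m k ℝ) :
    restrictRows s (A + B) = restrictRows s A + restrictRows s B := by
  ext i j
  by_cases hi : i ∈ s <;> simp [hi]

lemma restrictRows_sub (s : Set m) (A B : Matrix m k ℝ) :
    restrictRows s (A - B) = restrictRows s A - restrictRows s B := by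
  ext i j
  by_cases hi : i ∈ s <;> simp [hi]

lemma restrictRows_compl_sub (A : Matrix m k ℝ) {s : Set m} {B : Matrix m k ℝ}
    (hB : support B ⊆ s) : restrictRows sᶜ (A - B) = restrictRows sᶜ A := by
  ext i j
  by_cases hi : i ∈ s
  · simp [hi]
  · simp [hi, notMem_support.1 (mt (@hB i) hi)]

lemma transpose_restrictRows_apply (s : Set m) (A : Matrix m k ℝ) (j : k) :
    (restrictRows s A)ᵀ j = s.indicator (Aᵀ j) := by
  ext i
  by_cases hi : i ∈ s <;> simp [hi]

lemma support_transpose_apply_subset {s : Set m} {A : Matrix m k ℝ} (h : support A ⊆ s) (j : k) :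
    support (Aᵀ j) ⊆ s :=
  fun _ hi => h fun hA => hi (congrFun hA j)

end restrictRows

lemma frobNorm_sq_eq_restrictRows_add_compl {a b : ℕ} (s : Set (Fin a))
    (X : Matrix (Fin a) (Fin b) ℝ) :
    frobNorm X ^ 2 = frobNorm (restrictRows s X) ^ 2 + frobNorm (restrictRows sᶜ X) ^ 2 := by
  simp only [frobNorm_sq, ← Finset.sum_add_distrib]
  refine Finset.sum_congr rfl fun i _ => Finset.sum_congr rfl fun j _ => ?_
  by_cases hi : i ∈ s <;> simp [hi]

lemma frobNorm_sub_le_two_mul_restrictRows {a b : ℕ} {s : Set (Fin a)}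
    {M W W' : Matrix (Fin a) (Fin b) ℝ} (hW : support W ⊆ s) (hW' : support W' ⊆ s)
    (h : frobNorm (M - W') ≤ frobNorm (M - W)) :
    frobNorm (W - W') ≤ 2 * frobNorm (restrictRows s (M - W)) := by
  -- off `s` the two residuals agree, so `W'` is also the closer one on the rows in `s`
  have hclose : frobNorm (restrictRows s (M - W')) ≤ frobNorm (restrictRows s (M - W)) := by
    have hsq := pow_le_pow_left₀ (frobNorm_nonneg _) h 2
    rw [frobNorm_sq_eq_restrictRows_add_compl s, frobNorm_sq_eq_restrictRows_add_compl s (M - W),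
      restrictRows_compl_sub M hW, restrictRows_compl_sub M hW'] at hsq
    exact (pow_le_pow_iff_left₀ (frobNorm_nonneg _) (frobNorm_nonneg _) two_ne_zero).1
      (by linarith)
  calc frobNorm (W - W')
      = frobNorm (restrictRows s (M - W') - restrictRows s (M - W)) := by
        rw [← restrictRows_sub, sub_sub_sub_cancel_left,
          restrictRows_eq_self (A := W - W') ((support_sub W W').trans (Set.union_subset hW hW'))]
    _ ≤ frobNorm (restrictRows s (M - W')) + frobNorm (restrictRows s (M - W)) :=
        frobNorm_sub_le _ _
    _ ≤ 2 * frobNorm (restrictRows s (M - W)) := by linarith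

namespace RIP

variable {p n t k : ℕ} {δ : ℝ} {D : Matrix (Fin p) (Fin n) ℝ} {S : Finset (Fin n)}

theorem dotProduct_bounds (hD : RIP t δ D) (hS : #S ≤ t) {x : Fin n → ℝ} (hx : support x ⊆ S) :
    (1 - δ) * (x ⬝ᵥ x) ≤ D *ᵥ x ⬝ᵥ D *ᵥ x ∧ D *ᵥ x ⬝ᵥ D *ᵥ x ≤ (1 + δ) * (x ⬝ᵥ x) := by
  simpa only [sum_sq_eq_dotProduct_self] using hD x ⟨S, hS, fun i hi => hx hi⟩

theorem two_mul_mulVec_dotProduct_sub_le (hD : RIP t δ D) (hS : #S ≤ t) {u v : Fin n → ℝ}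
    (hu : support u ⊆ S) (hv : support v ⊆ S) :
    2 * (D *ᵥ u ⬝ᵥ D *ᵥ v - u ⬝ᵥ v) ≤ δ * (u ⬝ᵥ u + v ⬝ᵥ v) := by
  have hadd := (hD.dotProduct_bounds hS (x := u + v)
    ((support_add u v).trans (Set.union_subset hu hv))).2
  have hsub := (hD.dotProduct_bounds hS (x := u - v)
    ((support_sub u v).trans (Set.union_subset hu hv))).1
  simp only [mulVec_add, mulVec_sub, add_dotProduct, dotProduct_add, sub_dotProduct,
    dotProduct_sub, dotProduct_comm v u, dotProduct_comm (D *ᵥ v) (D *ᵥ u)] at hadd hsub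
  linarith

theorem indicator_gram_sub_dotProduct_self_le (hD : RIP t δ D) (hδ : 0 < δ) (hS : #S ≤ t)
    {z : Fin n → ℝ} (hz : support z ⊆ S) :
    (S : Set (Fin n)).indicator (Dᵀ *ᵥ D *ᵥ z - z) ⬝ᵥ (S : Set (Fin n)).indicator (Dᵀ *ᵥ D *ᵥ z - z)
      ≤ δ ^ 2 * (z ⬝ᵥ z) := by
  set x := (S : Set (Fin n)).indicator (Dᵀ *ᵥ D *ᵥ z - z)
  have hxx : x ⬝ᵥ x = D *ᵥ x ⬝ᵥ D *ᵥ z - x ⬝ᵥ z := by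
    rw [indicator_dotProduct_indicator, dotProduct_sub, dotProduct_mulVec, vecMul_transpose]
  -- polarization at `(δ⁻¹ • x, z)` reads `2δ⁻¹‖x‖² ≤ δ⁻¹‖x‖² + δ‖z‖²`
  have h := hD.two_mul_mulVec_dotProduct_sub_le hS
    ((support_const_smul_subset δ⁻¹ x).trans Set.support_indicator_subset) hz
  simp only [mulVec_smul, smul_dotProduct, dotProduct_smul, smul_eq_mul, ← mul_sub, ← hxx] at h
  field_simp at h
  linarith

theorem indicator_transpose_dotProduct_self_le (hD : RIP t δ D) (hδ : -1 < δ) (hS : #S ≤ t)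
    (e : Fin p → ℝ) :
    (S : Set (Fin n)).indicator (Dᵀ *ᵥ e) ⬝ᵥ (S : Set (Fin n)).indicator (Dᵀ *ᵥ e)
      ≤ (1 + δ) * (e ⬝ᵥ e) := by
  set x := (S : Set (Fin n)).indicator (Dᵀ *ᵥ e)
  have hxx : x ⬝ᵥ x = D *ᵥ x ⬝ᵥ e := by
    rw [indicator_dotProduct_indicator, dotProduct_mulVec, vecMul_transpose]
  have hup := (hD.dotProduct_bounds hS (x := x) Set.support_indicator_subset).2
  have hsq := dotProduct_self_nonneg (D *ᵥ x - (1 + δ) • e)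
  simp only [dotProduct_sub, sub_dotProduct, dotProduct_smul, smul_dotProduct, smul_eq_mul,
    dotProduct_comm e, ← hxx] at hsq
  have h : (1 + δ) * (x ⬝ᵥ x) ≤ (1 + δ) * ((1 + δ) * (e ⬝ᵥ e)) := by linarith
  exact le_of_mul_le_mul_left h (by linarith)

theorem frobNorm_restrictRows_gram_sub_le (hD : RIP t δ D) (hδ : 0 < δ) (hS : #S ≤ t)
    {Z : Matrix (Fin n) (Fin k) ℝ} (hZ : support Z ⊆ S) :
    frobNorm (restrictRows S (Dᵀ * (D * Z) - Z)) ≤ δ * frobNorm Z := by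
  have h := frobNorm_le_sqrt_mul_of_col (X := restrictRows S (Dᵀ * (D * Z) - Z)) (Y := Z)
    (r := δ ^ 2) fun j => by
      rw [transpose_restrictRows_apply]
      exact hD.indicator_gram_sub_dotProduct_self_le hδ hS (support_transpose_apply_subset hZ j)
  rwa [Real.sqrt_sq hδ.le] at h

theorem frobNorm_restrictRows_transpose_mul_le (hD : RIP t δ D) (hδ : -1 < δ) (hS : #S ≤ t)
    (E : Matrix (Fin p) (Fin k) ℝ) :
    frobNorm (restrictRows S (Dᵀ * E)) ≤ Real.sqrt (1 + δ) * frobNorm E :=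
  frobNorm_le_sqrt_mul_of_col fun j => by
    rw [transpose_restrictRows_apply]
    exact hD.indicator_transpose_dotProduct_self_le hδ hS (Eᵀ j)

end RIP

lemma RowSparse.exists_support_subset {n k s : ℕ} {Z : Matrix (Fin n) (Fin k) ℝ}
    (h : RowSparse s Z) : ∃ S : Finset (Fin n), #S ≤ s ∧ support Z ⊆ S := by
  obtain ⟨S, hS, hZ⟩ := h
  exact ⟨S, hS, fun i hi => hZ i (Function.ne_iff.1 hi)⟩

theorem row_sparse_hard_thresholding_general (p n s k : ℕ)
    (δ : ℝ) (hδ0 : 0 < δ) (hδ1 : δ < 1)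
    (D : Matrix (Fin p) (Fin n) ℝ) (hD : RIP (2 * s) δ D)
    (Z : Matrix (Fin n) (Fin k) ℝ) (hZ : RowSparse s Z)
    (E : Matrix (Fin p) (Fin k) ℝ)
    (Z'' : Matrix (Fin n) (Fin k) ℝ) (hZ''sparse : RowSparse s Z'')
    (hZ''min : ∀ W : Matrix (Fin n) (Fin k) ℝ, RowSparse s W →
      frobNorm (Dᵀ * (D * Z + E) - Z'') ≤ frobNorm (Dᵀ * (D * Z + E) - W)) :
    frobNorm (Z - Z'') ≤ 2 * δ * frobNorm Z + 2 * Real.sqrt 2 * frobNorm E := by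
  have hbest := hZ''min Z hZ
  obtain ⟨S₁, hS₁, hZS₁⟩ := hZ.exists_support_subset
  obtain ⟨S₂, hS₂, hZ''S₂⟩ := hZ''sparse.exists_support_subset
  set S := S₁ ∪ S₂
  have hS : #S ≤ 2 * s := (card_union_le S₁ S₂).trans (by omega)
  have hZS : support Z ⊆ S := hZS₁.trans (by simp [S])
  have hZ''S : support Z'' ⊆ S := hZ''S₂.trans (by simp [S])
  have hsignal := hD.frobNorm_restrictRows_gram_sub_le hδ0 hS hZS
  have hnoise := hD.frobNorm_restrictRows_transpose_mul_le (by linarith) hS E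
  have hsqrt : Real.sqrt (1 + δ) ≤ Real.sqrt 2 := Real.sqrt_le_sqrt (by linarith)
  calc frobNorm (Z - Z'')
      ≤ 2 * frobNorm (restrictRows S (Dᵀ * (D * Z + E) - Z)) :=
        frobNorm_sub_le_two_mul_restrictRows hZS hZ''S hbest
    _ = 2 * frobNorm (restrictRows S (Dᵀ * (D * Z) - Z) + restrictRows S (Dᵀ * E)) := by
        rw [← restrictRows_add, Matrix.mul_add, add_sub_right_comm]
    _ ≤ 2 * (δ * frobNorm Z + Real.sqrt 2 * frobNorm E) := by
        gcongr
        exact (frobNorm_add_le _ _).trans (add_le_add hsignal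
          (hnoise.trans (mul_le_mul_of_nonneg_right hsqrt (frobNorm_nonneg E))))
    _ = 2 * δ * frobNorm Z + 2 * Real.sqrt 2 * frobNorm E := by ring

/-- Hard-thresholded recovery of an `s`-row-sparse matrix `Z` from inexact measurements
`Y = DZ + E`: any best `s`-row-sparse approximation `Z''` of `DᵀY` satisfies
`‖Z − Z''‖_F ≤ 2δ‖Z‖_F + 2√2‖E‖_F`. -/
theorem row_sparse_hard_thresholding (p n s k : ℕ) (hs : 1 ≤ s) (h2s : 2 * s ≤ n) (hk : 1 ≤ k)
    (δ : ℝ) (hδ0 : 0 < δ) (hδ1 : δ < 1)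
    (D : Matrix (Fin p) (Fin n) ℝ) (hD : RIP (2 * s) δ D)
    (Z : Matrix (Fin n) (Fin k) ℝ) (hZ : RowSparse s Z)
    (E : Matrix (Fin p) (Fin k) ℝ)
    (Z'' : Matrix (Fin n) (Fin k) ℝ) (hZ''sparse : RowSparse s Z'')
    (hZ''min : ∀ W : Matrix (Fin n) (Fin k) ℝ, RowSparse s W →
      frobNorm (Dᵀ * (D * Z + E) - Z'') ≤ frobNorm (Dᵀ * (D * Z + E) - W)) :
    frobNorm (Z - Z'') ≤ 2 * δ * frobNorm Z + 2 * Real.sqrt 2 * frobNorm E :=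
  row_sparse_hard_thresholding_general p n s k δ hδ0 hδ1 D hD Z hZ E Z'' hZ''sparse hZ''min
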